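/- Equality L(p_m, p_u) = K·√(p_m² − p_u²) in the tangent-plane inequality holds if and only if (p_m, p_u) is a nonnegative scalar multiple of the linearization point (PR_m, PR_u), assuming p_m ≥ p_u ≥ 0 and PR_m > PR_u > 0. -/
import Mathlib


/-- Equality in the tangent-plane inequality holds iff `(pm, pu)` is a
nonnegative scalar multiple of the linearization point `(PRm, PRu)`. -/
theorem tangent_plane_equality_iff_proportional
    (K PRm PRu pm pu : ℝ)
    (hK : 0 < K) (hPR : PRu < PRm) (hPRu : 0 < PRu)
    (hpm : pu ≤ pm) (hpu : 0 ≤ pu) :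
    K * (PRm * pm - PRu * pu) / Real.sqrt (PRm ^ 2 - PRu ^ 2) =
      K * Real.sqrt (pm ^ 2 - pu ^ 2)
    ↔ ∃ t : ℝ, 0 ≤ t ∧ pm = t * PRm ∧ pu = t * PRu := by
  have hD : (0:ℝ) < PRm ^ 2 - PRu ^ 2 := by nlinarith
  have hDs : 0 < Real.sqrt (PRm ^ 2 - PRu ^ 2) := Real.sqrt_pos.mpr hD
  have hq : (0:ℝ) ≤ pm ^ 2 - pu ^ 2 := by nlinarith
  have hD2 : Real.sqrt (PRm ^ 2 - PRu ^ 2) ^ 2 = PRm ^ 2 - PRu ^ 2 :=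
    Real.sq_sqrt hD.le
  constructor
  · intro h
    have h' : PRm * pm - PRu * pu =
        Real.sqrt (PRm ^ 2 - PRu ^ 2) * Real.sqrt (pm ^ 2 - pu ^ 2) := by
      field_simp at h
      nlinarith [h, hDs, hK]
    have hsq : (PRm * pm - PRu * pu) ^ 2 = (PRm ^ 2 - PRu ^ 2) * (pm ^ 2 - pu ^ 2) := by
      rw [h', mul_pow, hD2, Real.sq_sqrt hq]
    have hcross : PRm * pu = PRu * pm := by nlinarith [sq_nonneg (PRm * pu - PRu * pm)]
    have hPRm : (0:ℝ) < PRm := hPRu.trans hPR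
    have hpm0 : 0 ≤ pm := hpu.trans hpm
    refine ⟨pm / PRm, by positivity, by rw [div_mul_cancel₀ _ hPRm.ne'], ?_⟩
    rw [div_mul_eq_mul_div, eq_div_iff hPRm.ne']
    linear_combination hcross
  · rintro ⟨t, ht, rfl, rfl⟩
    rw [show (t * PRm) ^ 2 - (t * PRu) ^ 2 = t ^ 2 * (PRm ^ 2 - PRu ^ 2) by ring,
      Real.sqrt_mul (sq_nonneg t), Real.sqrt_sq ht]
    rw [div_eq_iff (ne_of_gt hDs)]
    linear_combination -K * t * hD2
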